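/- arXiv:1308.3429 — 11 statements merged into one kernel-verified Lean document; each statement's English description precedes it below -/
import Mathlib

section
/- In a C*-algebra A, for elements a, x ∈ A, the equations a = axa and (ax)* = ax hold simultaneously if and only if a = x*a*a. -/
theorem stmt_0 {A : Type*} [NonUnitalNormedRing A] [StarRing A] [CStarRing A] (a x : A) :
    (a = a * x * a ∧ star (a * x) = a * x) ↔ a = star x * star a * a := by
  constructor
  · rintro ⟨h1, h2⟩
    have : star x * star a = star (a * x) := by rw [star_mul]
    rw [this, h2, mul_assoc] at *
    exact h1
  · intro h
    have hb : a * x = star (a * x) * (a * x) := by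
      conv_lhs => rw [h]
      rw [star_mul, mul_assoc]
    have hsa : star (a * x) = a * x := by
      conv_lhs => rw [hb, star_mul, star_star]
      rw [← hb]
    constructor
    · conv_lhs => rw [h]
      rw [← star_mul, hsa, mul_assoc]
    · exact hsa
end

section
/- In a C*-algebra A, for elements a, x ∈ A, the equations a = axa and (xa)* = xa hold simultaneously if and only if a = aa*x*. -/
theorem stmt_1 {A : Type*} [NonUnitalNormedRing A] [StarRing A] [CStarRing A] (a x : A) :
    (a = a * x * a ∧ star (x * a) = x * a) ↔ a = a * star a * star x := by
  constructor
  · rintro ⟨h1, h2⟩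
    calc a = a * (x * a) := by rw [← mul_assoc]; exact h1
    _ = a * star (x * a) := by rw [h2]
    _ = a * star a * star x := by rw [star_mul, mul_assoc]
  · intro h
    have hsa : star (x * a) = x * a := by
      have : x * a = (x * a) * star (x * a) := by
        conv_lhs => rw [h]
        rw [star_mul]
        noncomm_ring
      rw [this, star_mul, star_star, ← this]
    refine ⟨?_, hsa⟩
    calc a = a * star a * star x := h
    _ = a * star (x * a) := by rw [star_mul, mul_assoc]
    _ = a * (x * a) := by rw [hsa]
    _ = a * x * a := by rw [mul_assoc]
end

section
/- In a C*-algebra A, for elements a, x ∈ A, the equations x = xax and (ax)* = ax hold simultaneously if and only if x = xx*a*. -/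
theorem stmt_2 {A : Type*} [NonUnitalNormedRing A] [StarRing A] [CStarRing A] (a x : A) :
    (x = x * a * x ∧ star (a * x) = a * x) ↔ x = x * star x * star a := by
  constructor
  · rintro ⟨h1, h2⟩
    calc x = x * (a * x) := by rw [← mul_assoc]; exact h1
    _ = x * star (a * x) := by rw [h2]
    _ = x * star x * star a := by rw [star_mul, mul_assoc]
  · intro h
    have hsa : star (a * x) = a * x := by
      have : a * x = (a * x) * star (a * x) := by
        conv_lhs => rw [h]
        rw [star_mul]
        noncomm_ring
      rw [this, star_mul, star_star]
    constructor
    · calc x = x * star x * star a := h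
      _ = x * star (a * x) := by rw [star_mul, mul_assoc]
      _ = x * (a * x) := by rw [hsa]
      _ = x * a * x := by rw [mul_assoc]
    · exact hsa
end

section
/- In a C*-algebra A, for elements a, x ∈ A, the equations x = xax and (xa)* = xa hold simultaneously if and only if x = a*x*x. -/
theorem stmt_3 {A : Type*} [NonUnitalNormedRing A] [StarRing A] [CStarRing A] (a x : A) :
    (x = x * a * x ∧ star (x * a) = x * a) ↔ x = star a * star x * x := by
  constructor
  · rintro ⟨h1, h2⟩
    have : star a * star x * x = star (x * a) * x := by rw [star_mul]
    rw [this, h2]; exact h1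
  · intro h
    have hx : x = star (x * a) * x := by rw [star_mul, ← h]
    have hsa : star (x * a) = x * a := by
      have hxa : x * a = star (x * a) * (x * a) := by
        conv_lhs => rw [hx]; rw [mul_assoc]
      rw [hxa, star_mul, star_star, ← mul_assoc]
    rw [hsa] at hx
    exact ⟨hx, hsa⟩
end

section
/- In a C*-algebra A, an element x ∈ A is the Moore-Penrose inverse of a ∈ A if and only if a = x*a*a and x = a*x*x. -/
/-- `x` satisfies the four Moore-Penrose equations for `a`. -/
def IsMPInv {A : Type*} [NonUnitalNormedRing A] [StarRing A] [CStarRing A] (a x : A) : Prop :=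
  a * x * a = a ∧ x * a * x = x ∧ star (a * x) = a * x ∧ star (x * a) = x * a

theorem stmt_4 {A : Type*} [NonUnitalNormedRing A] [StarRing A] [CStarRing A] (a x : A) :
    IsMPInv a x ↔ (a = star x * star a * a ∧ x = star a * star x * x) := by
  constructor
  · rintro ⟨h1, h2, h3, h4⟩
    constructor
    · have : star x * star a = a * x := by rw [← star_mul, h3]
      rw [this, h1]
    · have : star a * star x = x * a := by rw [← star_mul, h4]
      rw [this, h2]
  · rintro ⟨h1, h2⟩
    have h1' : star a = star a * a * x := by
      conv_lhs => rw [h1]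
      simp [star_mul, mul_assoc]
    have h2' : star x = star x * x * a := by
      conv_lhs => rw [h2]
      simp [star_mul, mul_assoc]
    have hax : star (a * x) = a * x := by
      rw [star_mul, h1', ← mul_assoc, ← mul_assoc, ← h1]
    have hxa : star (x * a) = x * a := by
      rw [star_mul, h2', ← mul_assoc, ← mul_assoc, ← h2]
    refine ⟨?_, ?_, hax, hxa⟩
    · have : a * x = star x * star a := by rw [← star_mul, hax]
      rw [this, ← h1]
    · have : x * a = star a * star x := by rw [← star_mul, hxa]
      rw [this, ← h2]
end

section
/- In a C*-algebra A, an element x ∈ A is the Moore-Penrose inverse of a ∈ A if and only if a = aa*x* and x = xx*a*. -/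
theorem stmt_5 {A : Type*} [NonUnitalNormedRing A] [StarRing A] [CStarRing A] (a x : A) :
    IsMPInv a x ↔ (a = a * star a * star x ∧ x = x * star x * star a) := by
  constructor
  · rintro ⟨h1, h2, h3, h4⟩
    constructor
    · calc a = a * x * a := h1.symm
        _ = a * (x * a) := mul_assoc a x a
        _ = a * star (x * a) := by rw [h4]
        _ = a * star a * star x := by rw [star_mul, ← mul_assoc]
    · calc x = x * a * x := h2.symm
        _ = x * (a * x) := mul_assoc x a x
        _ = x * star (a * x) := by rw [h3]
        _ = x * star x * star a := by rw [star_mul, ← mul_assoc]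
  · rintro ⟨h1, h2⟩
    -- rewrite hypotheses as a = a * star (x*a), x = x * star (a*x)
    have h1' : a = a * star (x * a) := by rw [star_mul]; rw [← mul_assoc]; exact h1
    have h2' : x = x * star (a * x) := by rw [star_mul]; rw [← mul_assoc]; exact h2
    have hs : x * a = (x * a) * star (x * a) := by
      conv_lhs => rw [h1', ← mul_assoc]
    have hs' : star (x * a) = x * a := by
      conv_lhs => rw [hs]
      rw [star_mul, star_star]
      exact hs.symm
    have ht : a * x = (a * x) * star (a * x) := by
      conv_lhs => rw [h2', ← mul_assoc]
    have ht' : star (a * x) = a * x := by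
      conv_lhs => rw [ht]
      rw [star_mul, star_star]
      exact ht.symm
    refine ⟨?_, ?_, ht', hs'⟩
    · conv_rhs => rw [h1', hs', ← mul_assoc]
    · conv_rhs => rw [h2', ht', ← mul_assoc]
end

section
/- In a C*-algebra A, an element x ∈ A is the Moore-Penrose inverse of a ∈ A if and only if a* = xaa* and x = xx*a*. -/
theorem stmt_6 {A : Type*} [NonUnitalNormedRing A] [StarRing A] [CStarRing A] (a x : A) :
    IsMPInv a x ↔ (star a = x * a * star a ∧ x = x * star x * star a) := by
  constructor
  · rintro ⟨h1, h2, h3, h4⟩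
    refine ⟨?_, ?_⟩
    · calc star a = star (a * (x * a)) := by rw [← mul_assoc, h1]
        _ = star (x * a) * star a := star_mul _ _
        _ = x * a * star a := by rw [h4]
    · calc x = x * (a * x) := by rw [← mul_assoc, h2]
        _ = x * star (a * x) := by rw [h3]
        _ = x * (star x * star a) := by rw [star_mul]
        _ = x * star x * star a := by rw [mul_assoc]
  · rintro ⟨h1, h2⟩
    have hx : star x = a * (x * star x) := by
      simpa [star_mul, mul_assoc] using congrArg star h2
    have ha : a = a * (star a * star x) := by
      simpa [star_mul, mul_assoc] using congrArg star h1
    have ep : star (a * x) = (a * x) * star (a * x) := by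
      calc star (a * x) = star x * star a := star_mul _ _
        _ = (a * (x * star x)) * star a := by rw [← hx]
        _ = (a * x) * (star x * star a) := by simp only [mul_assoc]
        _ = (a * x) * star (a * x) := by rw [star_mul]
    have ep2 : a * x = (a * x) * star (a * x) := by
      have := congrArg star ep
      simpa [star_mul, star_star, mul_assoc] using this
    have hp : star (a * x) = a * x := ep.trans ep2.symm
    have ha2 : star a = x * (a * star a) := by rw [← mul_assoc]; exact h1
    have eq1 : star (x * a) = (x * a) * star (x * a) := by
      calc star (x * a) = star a * star x := star_mul _ _
        _ = (x * (a * star a)) * star x := by rw [← ha2]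
        _ = (x * a) * (star a * star x) := by simp only [mul_assoc]
        _ = (x * a) * star (x * a) := by rw [star_mul]
    have eq2 : x * a = (x * a) * star (x * a) := by
      have := congrArg star eq1
      simpa [star_mul, star_star, mul_assoc] using this
    have hq : star (x * a) = x * a := eq1.trans eq2.symm
    refine ⟨?_, ?_, hp, hq⟩
    · calc a * x * a = a * (x * a) := by rw [mul_assoc]
        _ = a * star (x * a) := by rw [hq]
        _ = a * (star a * star x) := by rw [star_mul]
        _ = a := ha.symm
    · calc x * a * x = x * (a * x) := by rw [mul_assoc]
        _ = x * star (a * x) := by rw [hp]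
        _ = x * (star x * star a) := by rw [star_mul]
        _ = x := by rw [← mul_assoc]; exact h2.symm
end

section
/- In a C*-algebra A, an element x ∈ A is the Moore-Penrose inverse of a ∈ A if and only if a* = a*ax and x = a*x*x. -/
theorem stmt_7 {A : Type*} [NonUnitalNormedRing A] [StarRing A] [CStarRing A] (a x : A) :
    IsMPInv a x ↔ (star a = star a * a * x ∧ x = star a * star x * x) := by
  constructor
  · rintro ⟨h1, h2, h3, h4⟩
    refine ⟨?_, ?_⟩
    · calc star a = star (a * x * a) := by rw [h1]
        _ = star a * star (a * x) := by rw [star_mul]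
        _ = star a * (a * x) := by rw [h3]
        _ = star a * a * x := by rw [mul_assoc]
    · calc x = x * a * x := h2.symm
        _ = star (x * a) * x := by rw [h4]
        _ = star a * star x * x := by rw [star_mul]
  · rintro ⟨h1, h2⟩
    -- a*x is self-adjoint
    have hq : star (a * x) * (a * x) = star (a * x) := by
      calc star (a * x) * (a * x) = star x * star a * (a * x) := by rw [star_mul]
        _ = star x * (star a * a * x) := by simp only [mul_assoc]
        _ = star x * star a := by rw [← h1]
        _ = star (a * x) := (star_mul a x).symm
    have hsq : star (a * x) = a * x := by
      have : a * x = star (a * x) := calc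
        a * x = star (star (a * x)) := (star_star _).symm
        _ = star (star (a * x) * (a * x)) := by rw [hq]
        _ = star (a * x) * star (star (a * x)) := by rw [star_mul]
        _ = star (a * x) * (a * x) := by rw [star_star]
        _ = star (a * x) := hq
      exact this.symm
    have haxa : a * x * a = a := by
      calc a * x * a = star (a * x) * a := by rw [hsq]
        _ = star x * star a * a := by rw [star_mul]
        _ = star (star a * a * x) := by rw [star_mul, star_mul, star_star, mul_assoc]
        _ = star (star a) := by rw [← h1]
        _ = a := star_star a
    -- x*a is self-adjoint
    have hr : star (x * a) * (x * a) = x * a := by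
      calc star (x * a) * (x * a) = star a * star x * (x * a) := by rw [star_mul]
        _ = star a * star x * x * a := by rw [mul_assoc (star a * star x)]
        _ = x * a := by rw [← h2]
    have hsr : star (x * a) = x * a := by
      conv_lhs => rw [← hr]
      rw [star_mul, star_star, hr]
    have hxax : x * a * x = x := by
      calc x * a * x = star (x * a) * x := by rw [hsr]
        _ = star a * star x * x := by rw [star_mul]
        _ = x := h2.symm
    exact ⟨haxa, hxax, hsq, hsr⟩
end

section
/- Let A be a C*-algebra and let a, b ∈ A be regular elements such that ab is regular, with Moore-Penrose inverses a†, b†, (ab)†. Set p = bb†, q = a†(a†)*, r = bb*, s = a†a. Then (ab)† = b†a† if and only if a(pq − qp)(b†)* = 0 and a(rs − sr)(b†)* = 0. -/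
private lemma mp_unique {A : Type*} [NonUnitalNormedRing A] [StarRing A] [CStarRing A]
    {a x y : A} (hx : IsMPInv a x) (hy : IsMPInv a y) : x = y := by
  obtain ⟨hx1, hx2, hx3, hx4⟩ := hx
  obtain ⟨hy1, hy2, hy3, hy4⟩ := hy
  have hax : a * x = a * y := by
    calc a * x = (a * y * a) * x := by rw [hy1]
    _ = (a * y) * (a * x) := by noncomm_ring
    _ = star (a * y) * star (a * x) := by rw [hy3, hx3]
    _ = star ((a * x) * (a * y)) := by rw [← star_mul]
    _ = star ((a * x * a) * y) := by rw [show (a * x) * (a * y) = (a * x * a) * y from by noncomm_ring]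
    _ = star (a * y) := by rw [hx1]
    _ = a * y := hy3
  have hxa : x * a = y * a := by
    calc x * a = x * (a * y * a) := by rw [hy1]
    _ = (x * a) * (y * a) := by noncomm_ring
    _ = star (x * a) * star (y * a) := by rw [hx4, hy4]
    _ = star ((y * a) * (x * a)) := by rw [← star_mul]
    _ = star (y * (a * x * a)) := by rw [show (y * a) * (x * a) = y * (a * x * a) from by noncomm_ring]
    _ = star (y * a) := by rw [hx1]
    _ = y * a := hy4
  calc x = x * a * x := hx2.symm
  _ = y * a * x := by rw [hxa]
  _ = y * (a * x) := by rw [mul_assoc]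
  _ = y * (a * y) := by rw [hax]
  _ = y * a * y := by rw [mul_assoc]
  _ = y := hy2

private lemma mp_char {A : Type*} [NonUnitalNormedRing A] [StarRing A] [CStarRing A]
    {c x : A} :
    IsMPInv c x ↔ (c * x * star x = star x ∧ c * star c * star x = c) := by
  constructor
  · rintro ⟨h1, h2, h3, h4⟩
    constructor
    · calc c * x * star x = star (c * x) * star x := by rw [h3]
      _ = star (x * (c * x)) := by rw [← star_mul]
      _ = star (x * c * x) := by rw [mul_assoc]
      _ = star x := by rw [h2]
    · calc c * star c * star x = c * (star c * star x) := by rw [mul_assoc]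
      _ = c * star (x * c) := by rw [star_mul]
      _ = c * (x * c) := by rw [h4]
      _ = c * x * c := by rw [mul_assoc]
      _ = c := h1
  · rintro ⟨e1, e2⟩
    have e1' : x * star x * star c = x := by
      have := congrArg star e1
      simpa [star_mul, star_star, mul_assoc] using this
    have e2' : x * c * star c = star c := by
      have := congrArg star e2
      simpa [star_mul, star_star, mul_assoc] using this
    refine ⟨?_, ?_, ?_, ?_⟩
    · calc c * x * c = c * x * (c * star c * star x) := by rw [e2]
      _ = c * (x * c * star c) * star x := by noncomm_ring
      _ = c * star c * star x := by rw [e2']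
      _ = c := e2
    · calc x * c * x = x * c * (x * star x * star c) := by rw [e1']
      _ = x * (c * x * star x) * star c := by noncomm_ring
      _ = x * star x * star c := by rw [e1]
      _ = x := e1'
    · have hcx : c * x = c * (x * star x * star c) := by rw [e1']
      rw [hcx]
      simp only [star_mul, star_star]
      noncomm_ring
    · have hxc : x * c = x * (c * star c * star x) := by rw [e2]
      rw [hxc]
      simp only [star_mul, star_star]
      noncomm_ring

theorem stmt_10 {A : Type*} [NonUnitalNormedRing A] [StarRing A] [CStarRing A]
    (a b ad bd abd p q r s : A)
    (ha : IsMPInv a ad) (hb : IsMPInv b bd) (hab : IsMPInv (a * b) abd)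
    (hp : p = b * bd) (hq : q = ad * star ad) (hr : r = b * star b) (hs : s = ad * a) :
    abd = bd * ad ↔
      (a * (p * q - q * p) * star bd = 0 ∧ a * (r * s - s * r) * star bd = 0) := by
  subst hp hq hr hs
  obtain ⟨ha1, ha2, ha3, ha4⟩ := ha
  obtain ⟨hb1, hb2, hb3, hb4⟩ := hb
  have haq : a * ad * star ad = star ad := by
    conv_lhs => rw [← ha3]
    rw [← star_mul, ← mul_assoc, ha2]
  have hbp : b * bd * star bd = star bd := by
    conv_lhs => rw [← hb3]
    rw [← star_mul, ← mul_assoc, hb2]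
  have hsa : star a * star ad = ad * a := by rw [← star_mul, ha4]
  have hsb : star b * star bd = bd * b := by rw [← star_mul, hb4]
  have huniq : abd = bd * ad ↔ IsMPInv (a * b) (bd * ad) :=
    ⟨fun h => h ▸ hab, fun h => mp_unique hab h⟩
  have E1 : a * ((b * bd) * (ad * star ad) - (ad * star ad) * (b * bd)) * star bd
      = (a * b) * (bd * ad) * star (bd * ad) - star (bd * ad) := by
    rw [star_mul, mul_sub, sub_mul]
    congr 1
    · noncomm_ring
    · calc a * ((ad * star ad) * (b * bd)) * star bd
          = (a * ad * star ad) * (b * bd * star bd) := by noncomm_ring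
      _ = star ad * star bd := by rw [haq, hbp]
  have E2 : a * ((b * star b) * (ad * a) - (ad * a) * (b * star b)) * star bd
      = (a * b) * star (a * b) * star (bd * ad) - a * b := by
    rw [star_mul, star_mul, mul_sub, sub_mul]
    congr 1
    · have h : (a * b) * (star b * star a) * (star ad * star bd)
          = a * b * star b * (star a * star ad) * star bd := by noncomm_ring
      rw [h, hsa]
      noncomm_ring
    · calc a * ((ad * a) * (b * star b)) * star bd
          = (a * ad * a) * (b * (star b * star bd)) := by noncomm_ring
      _ = a * (b * (bd * b)) := by rw [ha1, hsb]
      _ = a * b := by rw [show b * (bd * b) = b from by rw [← mul_assoc, hb1]]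
  rw [huniq, mp_char]
  constructor
  · rintro ⟨h1, h2⟩
    exact ⟨by rw [E1, h1, sub_self], by rw [E2, h2, sub_self]⟩
  · rintro ⟨h1, h2⟩
    rw [E1] at h1
    rw [E2] at h2
    exact ⟨sub_eq_zero.mp h1, sub_eq_zero.mp h2⟩
end

section
/- Let H be a Hilbert space and T a bounded regular operator on H. Then T is Moore-Penrose hermitian (T† = T) if and only if there exist orthogonal closed subspaces H₁ and H₂ with H = H₁ ⊕ H₂, T restricted to H₁ is zero, T(H₂) ⊆ H₂, and the restriction T₂ of T to H₂ satisfies T₂² = I₂. -/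
/-!
The Moore-Penrose inverse is unique, so `T† = T` says exactly that `T` is its own Moore-Penrose
inverse, i.e. `T³ = T` and `T²` is self-adjoint. Then `P = T²` is an orthogonal projection
commuting with `T`; in the orthogonal splitting `H = ker P ⊕ range P`, `T` vanishes on
`ker P = ker T`, maps everything into `range P`, and `T² = P` is the identity on `range P`. Conversely, for such a splitting `T²` is the orthogonal projection onto
`H₂`, whence `T³ = T` and `T²` is self-adjoint.
-/

open scoped InnerProductSpace

structure IsMoorePenroseInverse {R : Type*} [Mul R] [Star R] (a b : R) : Prop where
  mul_mul_self : a * b * a = a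
  mul_self_mul : b * a * b = b
  isSelfAdjoint_mul : IsSelfAdjoint (a * b)
  isSelfAdjoint_mul' : IsSelfAdjoint (b * a)

namespace IsMoorePenroseInverse

variable {R : Type*} [Semigroup R] [StarMul R] {a b c : R}

theorem mul_left_eq (hb : IsMoorePenroseInverse a b) (hc : IsMoorePenroseInverse a c) :
    a * b = a * c :=
  calc a * b = a * c * a * b := by rw [hc.mul_mul_self]
    _ = star (a * c) * star (a * b) := by
      rw [hb.isSelfAdjoint_mul.star_eq, hc.isSelfAdjoint_mul.star_eq, mul_assoc (a * c)]
    _ = star (a * b * a * c) := by rw [mul_assoc (a * b), star_mul (a * b)]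
    _ = a * c := by rw [hb.mul_mul_self, hc.isSelfAdjoint_mul.star_eq]

theorem mul_right_eq (hb : IsMoorePenroseInverse a b) (hc : IsMoorePenroseInverse a c) :
    b * a = c * a :=
  calc b * a = b * (a * c * a) := by rw [hc.mul_mul_self]
    _ = star (b * a) * star (c * a) := by
      rw [hb.isSelfAdjoint_mul'.star_eq, hc.isSelfAdjoint_mul'.star_eq]
      simp only [mul_assoc]
    _ = star (c * (a * b * a)) := by
      rw [← star_mul]
      simp only [mul_assoc]
    _ = c * a := by rw [hb.mul_mul_self, hc.isSelfAdjoint_mul'.star_eq]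

theorem unique (hb : IsMoorePenroseInverse a b) (hc : IsMoorePenroseInverse a c) : b = c :=
  calc b = b * (a * b) := by rw [← mul_assoc, hb.mul_self_mul]
    _ = b * a * c := by rw [hb.mul_left_eq hc, mul_assoc]
    _ = c := by rw [hb.mul_right_eq hc, hc.mul_self_mul]

theorem eq_iff (hb : IsMoorePenroseInverse a b) : c = b ↔ IsMoorePenroseInverse a c :=
  ⟨fun h ↦ h ▸ hb, fun hc ↦ hc.unique hb⟩

theorem self_iff : IsMoorePenroseInverse a a ↔ a * a * a = a ∧ IsSelfAdjoint (a * a) :=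
  ⟨fun h ↦ ⟨h.mul_mul_self, h.isSelfAdjoint_mul⟩, fun ⟨h, h'⟩ ↦ ⟨h, h, h', h'⟩⟩

end IsMoorePenroseInverse

namespace ContinuousLinearMap

variable {𝕜 E : Type*} [RCLike 𝕜] [NormedAddCommGroup E] [InnerProductSpace 𝕜 E]
  {T : E →L[𝕜] E}

theorem isMoorePenroseInverse_iff [CompleteSpace E] {S : E →L[𝕜] E} :
    IsMoorePenroseInverse T S ↔ T ∘L S ∘L T = T ∧ S ∘L T ∘L S = S ∧
      adjoint (T ∘L S) = T ∘L S ∧ adjoint (S ∘L T) = S ∘L T := by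
  simp only [← mul_def, ← star_eq_adjoint, ← mul_assoc]
  exact ⟨fun ⟨h1, h2, h3, h4⟩ ↦ ⟨h1, h2, h3, h4⟩, fun ⟨h1, h2, h3, h4⟩ ↦ ⟨h1, h2, h3, h4⟩⟩

theorem exists_orthogonal_decomposition_of_cube_eq_self (hcube : T * T * T = T)
    (hsym : (↑(T * T) : E →ₗ[𝕜] E).IsSymmetric) :
    ∃ H₁ H₂ : Submodule 𝕜 E,
      IsClosed (H₁ : Set E) ∧ IsClosed (H₂ : Set E) ∧
      (∀ x ∈ H₁, ∀ y ∈ H₂, ⟪x, y⟫_𝕜 = 0) ∧ IsCompl H₁ H₂ ∧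
      (∀ x ∈ H₁, T x = 0) ∧ (∀ x ∈ H₂, T x ∈ H₂) ∧
      (∀ x ∈ H₂, T (T x) = x) := by
  set P := T * T
  have hPT (x : E) : P (T x) = T x := congr($hcube x)
  have hTP (x : E) : T (P x) = T x := congr($((mul_assoc T T T).symm.trans hcube) x)
  have hidem : IsIdempotentElem P := by
    ext x
    exact congr(T $(hTP x))
  have hcompl : IsCompl P.ker P.range :=
    (LinearMap.IsIdempotentElem.isCompl (isIdempotentElem_toLinearMap_iff.mpr hidem)).symm
  refine ⟨P.ker, P.range, P.isClosed_ker, IsIdempotentElem.isClosed_range hidem, ?_, hcompl, ?_,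
    fun x _ ↦ ⟨T x, hPT x⟩, ?_⟩
  · rintro x (hx : P x = 0) _ ⟨z, rfl⟩
    rw [← hsym, coe_coe, hx, inner_zero_left]
  · rintro x (hx : P x = 0)
    rw [← hTP, hx, map_zero]
  · rintro _ ⟨z, rfl⟩
    exact congr($hidem z)

section Decomposition

variable {H₁ H₂ : Submodule 𝕜 E} (hzero : ∀ x ∈ H₁, T x = 0) (hsq : ∀ x ∈ H₂, T (T x) = x)
include hzero

theorem apply_add_eq_of_mem {a b : E} (ha : a ∈ H₁) : T (a + b) = T b := by
  rw [map_add, hzero a ha, zero_add]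

include hsq

theorem apply_apply_add_eq_of_mem {a b : E} (ha : a ∈ H₁) (hb : b ∈ H₂) : T (T (a + b)) = b := by
  rw [apply_add_eq_of_mem hzero ha, hsq b hb]

variable (hcompl : IsCompl H₁ H₂)
include hcompl

theorem cube_eq_self_of_isCompl : T * T * T = T := by
  ext x
  obtain ⟨a, b, ha, hb, rfl⟩ := Submodule.codisjoint_iff_exists_add_eq.mp hcompl.codisjoint x
  simp only [mul_apply_eq_comp]
  rw [apply_add_eq_of_mem hzero ha, hsq b hb]

theorem isSymmetric_sq_of_isCompl (horth : ∀ x ∈ H₁, ∀ y ∈ H₂, ⟪x, y⟫_𝕜 = 0) :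
    (↑(T * T) : E →ₗ[𝕜] E).IsSymmetric := by
  have hdecomp := Submodule.codisjoint_iff_exists_add_eq.mp hcompl.codisjoint
  intro x y
  obtain ⟨a, b, ha, hb, rfl⟩ := hdecomp x
  obtain ⟨c, d, hc, hd, rfl⟩ := hdecomp y
  simp only [coe_coe, mul_apply_eq_comp]
  rw [apply_apply_add_eq_of_mem hzero hsq ha hb, apply_apply_add_eq_of_mem hzero hsq hc hd,
    inner_add_left, inner_add_right, horth a ha d hd, ← inner_conj_symm, horth c hc b hb,
    map_zero, zero_add]

end Decomposition

end ContinuousLinearMap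

open ContinuousLinearMap in
theorem stmt_18 {H : Type*} [NormedAddCommGroup H] [InnerProductSpace ℂ H] [CompleteSpace H]
    (T Td : H →L[ℂ] H)
    (h1 : T ∘L Td ∘L T = T) (h2 : Td ∘L T ∘L Td = Td)
    (h3 : ContinuousLinearMap.adjoint (T ∘L Td) = T ∘L Td)
    (h4 : ContinuousLinearMap.adjoint (Td ∘L T) = Td ∘L T) :
    Td = T ↔
      ∃ H₁ H₂ : Submodule ℂ H,
        IsClosed (H₁ : Set H) ∧ IsClosed (H₂ : Set H) ∧
        (∀ x ∈ H₁, ∀ y ∈ H₂, ⟪x, y⟫_ℂ = 0) ∧ IsCompl H₁ H₂ ∧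
        (∀ x ∈ H₁, T x = 0) ∧ (∀ x ∈ H₂, T x ∈ H₂) ∧
        (∀ x ∈ H₂, T (T x) = x) := by
  have hTd : IsMoorePenroseInverse T Td := isMoorePenroseInverse_iff.mpr ⟨h1, h2, h3, h4⟩
  rw [eq_comm, hTd.eq_iff, IsMoorePenroseInverse.self_iff, isSelfAdjoint_iff_isSymmetric]
  constructor
  · rintro ⟨hcube, hsym⟩
    exact exists_orthogonal_decomposition_of_cube_eq_self hcube hsym
  · rintro ⟨H₁, H₂, -, -, horth, hcompl, hzero, -, hsq⟩
    exact ⟨cube_eq_self_of_isCompl hzero hsq hcompl,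
      isSymmetric_sq_of_isCompl hzero hsq hcompl horth⟩
end

section
/- In a C*-algebra A, an element a ∈ A is a normal Moore-Penrose hermitian element (a† = a and a*a = aa*) if and only if a is a hermitian partial isometry (a* = a and a† = a*). -/
theorem stmt_19 {A : Type*} [NonUnitalNormedRing A] [StarRing A] [CStarRing A] (a : A) :
    (IsMPInv a a ∧ star a * a = a * star a) ↔ (star a = a ∧ IsMPInv a (star a)) := by
  constructor
  · rintro ⟨hmp, hn⟩
    obtain ⟨h1, -, h3, -⟩ := hmp
    have hA4 : star a * star a = a * a := by rw [← star_mul, h3]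
    have ha : a * (a * a) = a := by rw [← mul_assoc, h1]
    have k1 : star a * (a * a) = star a := by
      calc star a * (a * a) = star a * star (a * a) := by rw [h3]
        _ = star (a * a * a) := by rw [← star_mul]
        _ = star a := by rw [h1]
    have k2 : a * a * star a = star a := by
      calc a * a * star a = star (a * a) * star a := by rw [h3]
        _ = star (a * (a * a)) := by rw [← star_mul]
        _ = star a := by rw [ha]
    have A6 : a * (star a * a) = star a := by rw [hn, ← mul_assoc, k2]
    have A7 : star a * a * a = star a := by rw [mul_assoc, k1]
    have A8 : star a * (star a * a) = a := by rw [← mul_assoc, hA4, h1]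
    have A9 : star a * a * star a = a := by rw [mul_assoc, ← hn, A8]
    set b := star a - a with hb_def
    set s := a * a - star a * a with hs_def
    have P1 : a * a * (a * a) = a * a := by rw [← mul_assoc, h1]
    have P2 : a * a * (star a * a) = star a * a := by rw [← mul_assoc, k2]
    have P3 : star a * a * (a * a) = star a * a := by rw [mul_assoc, ha]
    have P4 : star a * a * (star a * a) = a * a := by rw [mul_assoc, A6, hA4]
    have hb2 : b * b = s + s := by
      simp only [hb_def, hs_def, sub_mul, mul_sub, hA4, ← hn]
      abel
    have hs2 : s * s = s + s := by
      simp only [hs_def, sub_mul, mul_sub, P1, P2, P3, P4]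
      abel
    have hsb : s * b = b + b := by
      simp only [hs_def, hb_def, sub_mul, mul_sub, k2, h1, A9, A7]
      abel
    have hbs : b * s = b + b := by
      simp only [hb_def, hs_def, mul_sub, sub_mul, k1, A8, ha, A6]
      abel
    have hss : star s = s := by
      simp only [hs_def, star_sub, star_mul, star_star, hA4]
    have hsbn : star b = -b := by
      simp only [hb_def, star_sub, star_star]
      abel
    have hx : star (s + b) * (s + b) = 0 := by
      rw [star_add, hss, hsbn, add_mul, mul_add, mul_add, hs2, hsb, neg_mul, neg_mul,
        hbs, hb2]
      abel
    have hx0 : s + b = 0 := (CStarRing.star_mul_self_eq_zero_iff _).mp hx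
    have hbneg : b = -s := eq_neg_of_add_eq_zero_right hx0
    have hbeq : b = s := by
      have hst := congrArg star hbneg
      rw [hsbn, star_neg, hss, neg_inj] at hst
      exact hst
    have hss0 : s + s = 0 := by
      have h' : s = -s := hbeq.symm.trans hbneg
      nth_rewrite 1 [h']
      abel
    have hssq : s * s = 0 := hs2.trans hss0
    have hs0 : s = 0 := by
      refine (CStarRing.star_mul_self_eq_zero_iff _).mp ?_
      rw [hss, hssq]
    have hb0 : b = 0 := hbeq.trans hs0
    have hsa : star a = a := by
      have := hb0
      rw [hb_def, sub_eq_zero] at this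
      exact this
    exact ⟨hsa, by rw [hsa]; exact ⟨h1, h1, h3, h3⟩⟩
  · rintro ⟨hsa, hm⟩
    rw [hsa] at hm
    exact ⟨hm, by rw [hsa]⟩
end
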